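/- arXiv:2104.02887 — 2 statements merged into one kernel-verified Lean document; each statement's English description precedes it below -/
import Mathlib

section
/- If p : E → B is a groupoid fibration and b : X → B is a functor from a groupoid X, then the canonical functor from the pseudofibre E_b := b/ps p to the comma category b/p followed by the localization b/p → π₁(b/p) is an equivalence of groupoids; in particular π₁(b/p) is equivalent to the isocomma category b/ps p. -/
open CategoryTheory

universe v₁ v₂ v₃ u₁ u₂ u₃

/-- A morphism `χ : e' ⟶ e` of `E` is *cartesian* for `p : E ⥤ B` when, for every `k ∈ E`,
the comparison square of hom-sets induced by `p` is a pullback of sets. -/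
def IsCartesianFor {E : Type u₁} {B : Type u₂} [Category.{v₁} E] [Category.{v₂} B]
    (p : E ⥤ B) {e' e : E} (χ : e' ⟶ e) : Prop :=
  ∀ (k : E) (g : k ⟶ e) (β : p.obj k ⟶ p.obj e'),
    p.map g = β ≫ p.map χ → ∃! h : k ⟶ e', h ≫ χ = g ∧ p.map h = β

/-- `p : E ⥤ B` is a *groupoid fibration* when every `β : b ⟶ p e` factors as
`σ.hom ≫ p χ` with `σ` an isomorphism, and every morphism of `E` is cartesian for `p`. -/
def GroupoidFibration {E : Type u₁} {B : Type u₂} [Category.{v₁} E] [Category.{v₂} B]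
    (p : E ⥤ B) : Prop :=
  (∀ (e : E) (b : B) (β : b ⟶ p.obj e),
      ∃ (e' : E) (χ : e' ⟶ e) (σ : b ≅ p.obj e'), β = σ.hom ≫ p.map χ) ∧
  (∀ {e' e : E} (χ : e' ⟶ e), IsCartesianFor p χ)

namespace PseudoFibreAux

variable {X : Type u₁} [Groupoid.{v₁} X] {E : Type u₂} {B : Type u₃}
  [Category.{v₂} E] [Category.{v₃} B] (b : X ⥤ B) (p : E ⥤ B)

/-- A cartesian morphism whose image is invertible is invertible. -/
lemma cart_isIso {e' e : E} (χ : e' ⟶ e) (hc : IsCartesianFor p χ)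
    (h : IsIso (p.map χ)) : IsIso χ := by
  obtain ⟨h₁, ⟨hc1, hm1⟩, -⟩ := hc e (𝟙 e) (inv (p.map χ)) (by simp)
  refine ⟨h₁, ?_, hc1⟩
  obtain ⟨u, -, huniq⟩ := hc e' χ (𝟙 _) (by simp)
  exact (huniq (χ ≫ h₁) ⟨by rw [Category.assoc, hc1, Category.comp_id],
    by rw [p.map_comp, hm1, IsIso.hom_inv_id]⟩).trans (huniq (𝟙 e') ⟨by simp, by simp⟩).symm

variable (hp : GroupoidFibration p)

/-- Chosen domain of the cartesian lift of the structure map of `Z`. -/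
noncomputable def Re (Z : Comma b p) : E := (hp.1 Z.right _ Z.hom).choose

/-- Chosen cartesian lift of the structure map of `Z`. -/
noncomputable def Rχ (Z : Comma b p) : Re b p hp Z ⟶ Z.right :=
  (hp.1 Z.right _ Z.hom).choose_spec.choose

/-- Chosen isomorphism part of the factorization of the structure map of `Z`. -/
noncomputable def Rσ (Z : Comma b p) : b.obj Z.left ≅ p.obj (Re b p hp Z) :=
  (hp.1 Z.right _ Z.hom).choose_spec.choose_spec.choose

lemma Rfac (Z : Comma b p) : Z.hom = (Rσ b p hp Z).hom ≫ p.map (Rχ b p hp Z) :=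
  (hp.1 Z.right _ Z.hom).choose_spec.choose_spec.choose_spec

lemma Rχ_map (Z : Comma b p) :
    p.map (Rχ b p hp Z) = (Rσ b p hp Z).inv ≫ Z.hom := by
  rw [Rfac b p hp Z, Iso.inv_hom_id_assoc]

lemma Rψ_exists {Z Z' : Comma b p} (f : Z ⟶ Z') :
    ∃! ψ : Re b p hp Z ⟶ Re b p hp Z',
      ψ ≫ Rχ b p hp Z' = Rχ b p hp Z ≫ f.right ∧
        p.map ψ = (Rσ b p hp Z).inv ≫ b.map f.left ≫ (Rσ b p hp Z').hom := by
  refine hp.2 (Rχ b p hp Z') _ (Rχ b p hp Z ≫ f.right) _ ?_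
  rw [p.map_comp, Rχ_map b p hp Z]
  simp only [Category.assoc, ← Rfac b p hp Z']
  rw [← f.w]

/-- The action of the retraction on morphisms. -/
noncomputable def Rψ {Z Z' : Comma b p} (f : Z ⟶ Z') :
    Re b p hp Z ⟶ Re b p hp Z' := (Rψ_exists b p hp f).choose

lemma Rψ_comm {Z Z' : Comma b p} (f : Z ⟶ Z') :
    Rψ b p hp f ≫ Rχ b p hp Z' = Rχ b p hp Z ≫ f.right :=
  (Rψ_exists b p hp f).choose_spec.1.1

lemma Rψ_map {Z Z' : Comma b p} (f : Z ⟶ Z') :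
    p.map (Rψ b p hp f) = (Rσ b p hp Z).inv ≫ b.map f.left ≫ (Rσ b p hp Z').hom :=
  (Rψ_exists b p hp f).choose_spec.1.2

lemma Rψ_uniq {Z Z' : Comma b p} (f : Z ⟶ Z') (ψ : Re b p hp Z ⟶ Re b p hp Z')
    (h1 : ψ ≫ Rχ b p hp Z' = Rχ b p hp Z ≫ f.right)
    (h2 : p.map ψ = (Rσ b p hp Z).inv ≫ b.map f.left ≫ (Rσ b p hp Z').hom) :
    ψ = Rψ b p hp f :=
  (Rψ_exists b p hp f).choose_spec.2 ψ ⟨h1, h2⟩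

/-- The retraction of the comma category onto the pseudofibre. -/
noncomputable def R : Comma b p ⥤ ObjectProperty.FullSubcategory (fun Z : Comma b p => IsIso Z.hom) where
  obj Z := ⟨⟨Z.left, Re b p hp Z, (Rσ b p hp Z).hom⟩, inferInstance⟩
  map {Z Z'} f := ObjectProperty.homMk
    { left := f.left
      right := Rψ b p hp f
      w := by rw [Rψ_map b p hp f, Iso.hom_inv_id_assoc] }
  map_id Z := by
    have h : Rψ b p hp (𝟙 Z) = 𝟙 _ := (Rψ_uniq b p hp (𝟙 Z) (𝟙 _) (by simp) (by simp)).symm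
    exact InducedCategory.hom_ext (CommaMorphism.ext rfl h)
  map_comp {Z Z' Z''} f g := by
    have h : Rψ b p hp (f ≫ g) = Rψ b p hp f ≫ Rψ b p hp g := by
      refine (Rψ_uniq b p hp (f ≫ g) _ ?_ ?_).symm
      · rw [Category.assoc, Rψ_comm b p hp g, ← Category.assoc, Rψ_comm b p hp f]
        simp
      · rw [p.map_comp, Rψ_map b p hp f, Rψ_map b p hp g]
        simp
    exact InducedCategory.hom_ext (CommaMorphism.ext rfl h)

include hp in
/-- Every morphism of the pseudofibre is invertible. -/
lemma isIso_fullsub {Z Z' : ObjectProperty.FullSubcategory (fun Z : Comma b p => IsIso Z.hom)}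
    (f : Z ⟶ Z') : IsIso f := by
  haveI : IsIso Z.obj.hom := Z.property
  haveI : IsIso Z'.obj.hom := Z'.property
  obtain ⟨f⟩ := f
  have hw : b.map f.left ≫ Z'.obj.hom = Z.obj.hom ≫ p.map f.right := f.w
  have hpr : p.map f.right = inv Z.obj.hom ≫ b.map f.left ≫ Z'.obj.hom := by
    rw [hw, IsIso.inv_hom_id_assoc]
  haveI : IsIso (p.map f.right) := by rw [hpr]; infer_instance
  haveI : IsIso f.right := cart_isIso p f.right (hp.2 f.right) inferInstance
  have hw' : b.map (inv f.left) ≫ Z.obj.hom = Z'.obj.hom ≫ p.map (inv f.right) := by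
    rw [p.map_inv, b.map_inv, IsIso.inv_comp_eq, ← Category.assoc, IsIso.eq_comp_inv, hw]
  refine ⟨⟨ObjectProperty.homMk { left := inv f.left, right := inv f.right, w := hw' }, ?_, ?_⟩⟩
  · exact InducedCategory.hom_ext <| CommaMorphism.ext (by show f.left ≫ inv f.left = 𝟙 _; simp)
      (by show f.right ≫ inv f.right = 𝟙 _; simp)
  · exact InducedCategory.hom_ext <| CommaMorphism.ext (by show inv f.left ≫ f.left = 𝟙 _; simp)
      (by show inv f.right ≫ f.right = 𝟙 _; simp)

/-- The canonical natural transformation from the retraction-inclusion to the identity. -/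
noncomputable def ε :
    R b p hp ⋙ ObjectProperty.ι (fun Z : Comma b p => IsIso Z.hom) ⟶
      𝟭 (Comma b p) where
  app Z :=
    { left := 𝟙 Z.left
      right := Rχ b p hp Z
      w := by
        dsimp [R, ObjectProperty.ι]
        rw [b.map_id, Category.id_comp, ← Rfac b p hp Z] }
  naturality Z Z' f := by
    refine CommaMorphism.ext ?_ ?_
    · simp [R, ObjectProperty.ι]
    · simpa [R, ObjectProperty.ι] using Rψ_comm b p hp f

end PseudoFibreAux

/-- If `p : E ⥤ B` is a groupoid fibration and `b : X ⥤ B` is a functor from a groupoid `X`,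
then the inclusion of the pseudofibre `b/ps p` (the full subcategory of the comma category
`b/p` on the objects with invertible structure morphism) into `b/p`, followed by the
localization `b/p ⥤ π₁ (b/p)`, is an equivalence of groupoids; in particular `π₁ (b/p)`
is equivalent to the isocomma category `b/ps p`. -/
theorem pseudoFibre_equiv_piOne_comma {X : Type u₁} [Groupoid.{v₁} X]
    {E : Type u₂} {B : Type u₃} [Category.{v₂} E] [Category.{v₃} B]
    (b : X ⥤ B) (p : E ⥤ B) (hp : GroupoidFibration p) :
    (ObjectProperty.ι (fun Z : Comma b p => IsIso Z.hom) ⋙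
        (⊤ : MorphismProperty (Comma b p)).Q).IsEquivalence ∧
      Nonempty ((ObjectProperty.FullSubcategory fun Z : Comma b p => IsIso Z.hom) ≌
        (⊤ : MorphismProperty (Comma b p)).Localization) := by
  open PseudoFibreAux in
  let W : MorphismProperty (Comma b p) := ⊤
  let i := ObjectProperty.ι (fun Z : Comma b p => IsIso Z.hom)
  let F := i ⋙ W.Q
  have hR : W.IsInvertedBy (R b p hp) := fun _ _ f _ => isIso_fullsub b p hp _
  let G : W.Localization ⥤ _ := Localization.Construction.lift (R b p hp) hR
  have hQG : W.Q ⋙ G = R b p hp := Localization.Construction.fac _ _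
  -- the unit
  let εE : i ⋙ R b p hp ⟶ 𝟭 _ :=
    { app := fun Z => ObjectProperty.homMk ((ε b p hp).app (i.obj Z))
      naturality := fun Z Z' f => InducedCategory.hom_ext ((ε b p hp).naturality (i.map f)) }
  haveI : ∀ Z, IsIso (εE.app Z) := fun Z => isIso_fullsub b p hp _
  haveI : IsIso εE := NatIso.isIso_of_isIso_app εE
  have hFG : F ⋙ G = i ⋙ R b p hp := by
    rw [show F ⋙ G = i ⋙ (W.Q ⋙ G) from rfl, hQG]
  let η : 𝟭 (ObjectProperty.FullSubcategory fun Z : Comma b p => IsIso Z.hom) ≅ F ⋙ G :=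
    (asIso εE).symm ≪≫ eqToIso hFG.symm
  -- the counit
  let τnt : (R b p hp ⋙ F) ⟶ W.Q :=
    (Functor.whiskerRight (ε b p hp) W.Q : _ ⟶ 𝟭 _ ⋙ W.Q) ≫ (Functor.leftUnitor W.Q).hom
  haveI : ∀ Z, IsIso (τnt.app Z) := fun Z => by
    dsimp [τnt]
    rw [Category.comp_id]
    exact Localization.inverts W.Q W _ (MorphismProperty.top_apply _)
  haveI : IsIso τnt := NatIso.isIso_of_isIso_app τnt
  haveI : Localization.Lifting W.Q W (R b p hp ⋙ F) (G ⋙ F) :=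
    ⟨eqToIso (by rw [show W.Q ⋙ (G ⋙ F) = (W.Q ⋙ G) ⋙ F from rfl, hQG])⟩
  let t : G ⋙ F ≅ 𝟭 W.Localization :=
    Localization.liftNatIso W.Q W (R b p hp ⋙ F) W.Q (G ⋙ F) (𝟭 _) (asIso τnt)
  let e : (ObjectProperty.FullSubcategory fun Z : Comma b p => IsIso Z.hom) ≌ W.Localization :=
    CategoryTheory.Equivalence.mk F G η t
  exact ⟨e.isEquivalence_functor, ⟨e⟩⟩
end

section
/- A functor that is both ultimate and a groupoid fibration is an equivalence of categories. -/
open CategoryTheory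

universe v₁ v₂ v₃ u₁ u₂ u₃

/-- The fundamental groupoid `π₁ C` of a category `C`: the localization of `C`
at all of its morphisms. -/
abbrev piOne (C : Type u₁) [Category.{v₁} C] :=
  (⊤ : MorphismProperty C).Localization

/-- `π₁ C` is trivial: the localization of `C` at all morphisms is equivalent to the
terminal groupoid (the one-object one-morphism category). -/
def PiOneTrivial (C : Type u₁) [Category.{v₁} C] : Prop :=
  Nonempty (piOne C ≌ Discrete PUnit.{1})

/-- A functor `j : A ⥤ B` is *ultimate* when, for every `b : B`, the fundamental groupoid
`π₁ (b/j)` of the comma category `b/j` is equivalent to the terminal groupoid. -/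
def Ultimate {A : Type u₁} {B : Type u₂} [Category.{v₁} A] [Category.{v₂} B]
    (j : A ⥤ B) : Prop :=
  ∀ b : B, PiOneTrivial (StructuredArrow b j)

section Aux
variable {C : Type u₁} [Category.{v₁} C]

lemma piOneTrivial_nonempty (h : PiOneTrivial C) : Nonempty C := by
  obtain ⟨ε⟩ := h
  exact ⟨(Localization.Construction.objEquiv (⊤ : MorphismProperty C)).symm
    (ε.inverse.obj ⟨PUnit.unit⟩)⟩

lemma piOneTrivial_map_eq (h : PiOneTrivial C) {D : Type u₂} [Category.{v₂} D]
    (F : C ⥤ D) (hF : (⊤ : MorphismProperty C).IsInvertedBy F)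
    {x y : C} (f g : x ⟶ y) : F.map f = F.map g := by
  obtain ⟨ε⟩ := h
  have hQ : (⊤ : MorphismProperty C).Q.map f = (⊤ : MorphismProperty C).Q.map g := by
    apply ε.functor.map_injective
    apply Subsingleton.elim
  have h1 := Functor.congr_hom (Localization.Construction.fac F hF) f
  have h2 := Functor.congr_hom (Localization.Construction.fac F hF) g
  rw [Functor.comp_map] at h1 h2
  rw [hQ] at h1
  have h3 := h1.symm.trans h2
  simpa [cancel_epi, cancel_mono] using h3

lemma piOneTrivial_obj_iso (h : PiOneTrivial C) {D : Type u₂} [Category.{v₂} D]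
    (F : C ⥤ D) (hF : (⊤ : MorphismProperty C).IsInvertedBy F)
    (x y : C) : Nonempty (F.obj x ≅ F.obj y) := by
  obtain ⟨ε⟩ := h
  have hiso : (⊤ : MorphismProperty C).Q.obj x ≅ (⊤ : MorphismProperty C).Q.obj y :=
    ε.unitIso.app _ ≪≫ ε.inverse.mapIso (eqToIso (Subsingleton.elim _ _)) ≪≫
      (ε.unitIso.app _).symm
  have h1 := Functor.congr_obj (Localization.Construction.fac F hF) x
  have h2 := Functor.congr_obj (Localization.Construction.fac F hF) y
  exact ⟨eqToIso h1.symm ≪≫ (Localization.Construction.lift F hF).mapIso hiso ≪≫ eqToIso h2⟩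

lemma piOneTrivial_induct (h : PiOneTrivial C) (S : C → Prop)
    (hS : ∀ {x y : C}, (x ⟶ y) → (S x ↔ S y)) {x : C} (hx : S x) (y : C) : S y := by
  let F : C ⥤ Discrete Prop :=
    { obj := fun c => ⟨S c⟩
      map := fun f => eqToHom (by simp only [Discrete.mk.injEq]; exact propext (hS f))
      map_id := fun _ => Subsingleton.elim _ _
      map_comp := fun _ _ => Subsingleton.elim _ _ }
  obtain ⟨i⟩ := piOneTrivial_obj_iso h F (fun _ _ f _ => inferInstance) x y
  have hsx : S x = S y := Discrete.eq_of_hom i.hom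
  rw [← hsx]; exact hx

end Aux

/-- A functor that is both ultimate and a groupoid fibration is an equivalence of
categories. -/
theorem isEquivalence_of_ultimate_groupoidFibration {E : Type u₁} {B : Type u₂}
    [Category.{v₁} E] [Category.{v₂} B] (p : E ⥤ B)
    (hu : Ultimate p) (hf : GroupoidFibration p) : p.IsEquivalence := by
  -- vertical endomorphisms admit vertical left inverses
  have leftInv : ∀ {e : E} (h : e ⟶ e), p.map h = 𝟙 _ →
      ∃ h' : e ⟶ e, h' ≫ h = 𝟙 _ ∧ p.map h' = 𝟙 _ := by
    intro e h hv
    obtain ⟨h', ⟨hh1, hh2⟩, -⟩ := hf.2 h e (𝟙 e) (𝟙 _) (by simp [hv])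
    exact ⟨h', hh1, hh2⟩
  -- vertical endomorphisms are isomorphisms
  have vertIso : ∀ {e : E} (h : e ⟶ e), p.map h = 𝟙 _ → IsIso h := by
    intro e h hv
    obtain ⟨h', hh1, hv'⟩ := leftInv h hv
    obtain ⟨h'', hh2, -⟩ := leftInv h' hv'
    have heq : h = h'' := by
      calc h = (h'' ≫ h') ≫ h := by rw [hh2]; simp
        _ = h'' ≫ (h' ≫ h) := by simp
        _ = h'' := by rw [hh1]; simp
    exact ⟨h', by rw [heq]; exact hh2, hh1⟩
  -- the key lemma: for each e₀, (e₀, 𝟙) behaves as an initial object of (p e₀)/p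
  have key : ∀ e₀ : E,
      (∀ v : StructuredArrow (p.obj e₀) p,
        Nonempty (StructuredArrow.mk (𝟙 (p.obj e₀)) ⟶ v)) ∧
      (∀ h : e₀ ⟶ e₀, p.map h = 𝟙 _ → h = 𝟙 _) := by
    intro e₀
    let u₀ : StructuredArrow (p.obj e₀) p := StructuredArrow.mk (𝟙 (p.obj e₀))
    -- existence of morphisms from u₀, by connectedness
    have key1 : ∀ v : StructuredArrow (p.obj e₀) p, Nonempty (u₀ ⟶ v) := by
      refine piOneTrivial_induct (hu (p.obj e₀))
        (fun v => Nonempty (u₀ ⟶ v)) ?_ (x := u₀) ⟨𝟙 u₀⟩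
      intro v w χ
      constructor
      · rintro ⟨f⟩; exact ⟨f ≫ χ⟩
      · rintro ⟨f⟩
        have hpf : p.map f.right = w.hom :=
          (Category.id_comp (p.map f.right)).symm.trans (StructuredArrow.w f)
        have hcond : p.map f.right = v.hom ≫ p.map χ.right :=
          hpf.trans (StructuredArrow.w χ).symm
        obtain ⟨h, ⟨hh1, hh2⟩, -⟩ := hf.2 χ.right e₀ f.right v.hom hcond
        exact ⟨StructuredArrow.homMk h ((Category.id_comp (p.map h)).trans hh2)⟩
    refine ⟨key1, ?_⟩
    -- choose a morphism from u₀ to every object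
    let t : ∀ v : StructuredArrow (p.obj e₀) p, u₀ ⟶ v := fun v => (key1 v).some
    have hpt : ∀ v, p.map (t v).right = v.hom := by
      intro v
      exact (Category.id_comp (p.map (t v).right)).symm.trans (StructuredArrow.w (t v))
    -- the comparison functor to E
    have exu : ∀ {v w : StructuredArrow (p.obj e₀) p} (χ : v ⟶ w),
        ∃! h : e₀ ⟶ e₀, h ≫ (t w).right = (t v).right ≫ χ.right ∧ p.map h = 𝟙 _ := by
      intro v w χ
      refine hf.2 (t w).right e₀ ((t v).right ≫ χ.right) (𝟙 _) ?_
      calc p.map ((t v).right ≫ χ.right) = p.map (t v).right ≫ p.map χ.right :=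
            p.map_comp _ _
        _ = v.hom ≫ p.map χ.right := by rw [hpt v]
        _ = w.hom := StructuredArrow.w χ
        _ = p.map (t w).right := (hpt w).symm
        _ = 𝟙 (p.obj e₀) ≫ p.map (t w).right := (Category.id_comp _).symm
    let F : StructuredArrow (p.obj e₀) p ⥤ E :=
      { obj := fun _ => e₀
        map := fun χ => (exu χ).choose
        map_id := fun v => by
          refine ((exu (𝟙 v)).choose_spec.2 (𝟙 e₀) ?_).symm
          constructor
          · simp
          · simp
        map_comp := fun {v w x} χ ψ => by
          refine ((exu (χ ≫ ψ)).choose_spec.2 ((exu χ).choose ≫ (exu ψ).choose) ?_).symm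
          obtain ⟨hc1, hc2⟩ := (exu χ).choose_spec.1
          obtain ⟨hd1, hd2⟩ := (exu ψ).choose_spec.1
          constructor
          · rw [Category.assoc, hd1, ← Category.assoc, hc1]
            simp
          · rw [Functor.map_comp, hc2, hd2, Category.comp_id] }
    have hFinv : (⊤ : MorphismProperty (StructuredArrow (p.obj e₀) p)).IsInvertedBy F :=
      fun _ _ χ _ => vertIso (show e₀ ⟶ e₀ from F.map χ) (exu χ).choose_spec.1.2
    -- triviality of vertical endomorphisms of e₀
    intro h hv
    have hvc : u₀.hom ≫ p.map h = u₀.hom := (Category.id_comp (p.map h)).trans hv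
    set η : u₀ ⟶ u₀ := StructuredArrow.homMk h hvc with hη
    have hFη : (exu η).choose = 𝟙 e₀ := by
      have heq := piOneTrivial_map_eq (hu (p.obj e₀)) F hFinv η (𝟙 u₀)
      rw [F.map_id] at heq
      exact heq
    have hprop := (exu η).choose_spec.1.1
    rw [hFη, Category.id_comp] at hprop
    haveI : IsIso (t u₀).right := vertIso _ (hpt u₀)
    rw [hη] at hprop
    simp only [StructuredArrow.homMk_right] at hprop
    -- (t u₀).right = (t u₀).right ≫ h, cancel the iso
    exact (cancel_epi (t u₀).right).1
      (hprop.symm.trans (Category.comp_id ((t u₀).right)).symm)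
  constructor
  · -- faithful
    constructor
    intro x y f g hpfg
    have hcond : p.map f = 𝟙 _ ≫ p.map g := by simpa using hpfg
    obtain ⟨h, ⟨hh1, hh2⟩, -⟩ := hf.2 g x f (𝟙 _) hcond
    have : h = 𝟙 x := (key x).2 h hh2
    rw [this, Category.id_comp] at hh1
    exact hh1.symm
  · -- full
    constructor
    intro x y β
    obtain ⟨f⟩ := (key x).1 (StructuredArrow.mk β)
    exact ⟨f.right, (Category.id_comp (p.map f.right)).symm.trans (StructuredArrow.w f)⟩
  · -- essentially surjective
    constructor
    intro b
    obtain ⟨v⟩ := piOneTrivial_nonempty (hu b)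
    obtain ⟨e', χ, σ, -⟩ := hf.1 v.right b v.hom
    exact ⟨e', ⟨σ.symm⟩⟩
end
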